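/- Let (K, val) be a 2-henselian valued field, B its valuation ring in which 2 is a unit, A a subring with B ⊆ A ⊆ K, and ℳ a quasi-quadratic module in A. For a nonzero x ∈ A with val(x) = g, the following are equivalent: (1) x ∈ supp(ℳ) = ℳ ∩ (−ℳ); (2) M_g(ℳ) = F. Moreover, if M_g(ℳ) = F and h ≥ g, then M_h(ℳ) = F. In particular, ℳ = A if and only if M_e(ℳ) = F. -/

import Mathlib

/-!
Since `2` is invertible, `b * x = ((b + 1) / 2) ^ 2 * x + ((b - 1) / 2) ^ 2 * (-x)`, so the support
of `ℳ` is stable under multiplication by `A`; as `B ⊆ A`, once it contains `x` it contains every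
element of value `≥ val x`. On the other hand, two elements of equal value and equal angular
component differ by a square factor, which is then a unit of `B`; hence `M_g(ℳ) = F` exactly when
`ℳ` contains every element of value `g`.
-/

/-- A (multiplicatively written) valuation on a field `K` with value group `G`:
`v` is multiplicative and satisfies the ultrametric inequality on nonzero elements,
and is surjective onto `G`.  The value at `0` is irrelevant (the paper's `∞`). -/
structure MulValuation (K : Type*) [Field K] (G : Type*) [CommGroup G] [LinearOrder G] [IsOrderedMonoid G] where
  v : K → G
  map_mul : ∀ ⦃x y : K⦄, x ≠ 0 → y ≠ 0 → v (x * y) = v x * v y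
  min_le_map_add : ∀ ⦃x y : K⦄, x ≠ 0 → y ≠ 0 → x + y ≠ 0 → min (v x) (v y) ≤ v (x + y)
  surj : ∀ g : G, ∃ x : K, x ≠ 0 ∧ v x = g

namespace MulValuation

variable {K : Type*} [Field K] {G : Type*} [CommGroup G] [LinearOrder G] [IsOrderedMonoid G]

/-- The valuation ring `B = {x : val x ≥ e} ∪ {0}`, as a set. -/
def ringSet (V : MulValuation K G) : Set K := {x : K | x = 0 ∨ 1 ≤ V.v x}

/-- `val(Aˣ)`: the set of values of units of a subring `A` of `K`. -/
def unitVals (V : MulValuation K G) (A : Subring K) : Set G :=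
  {g : G | ∃ x : K, x ≠ 0 ∧ x ∈ A ∧ x⁻¹ ∈ A ∧ V.v x = g}

end MulValuation

/-- `π : K → F` is a residue homomorphism for `V`: it is a surjective ring
homomorphism on the valuation ring, whose nonvanishing locus on the valuation ring
is exactly the set of units of the valuation ring. -/
def MulValuation.IsResidue {K : Type*} [Field K] {G : Type*} [CommGroup G] [LinearOrder G] [IsOrderedMonoid G]
    {F : Type*} [Field F] (V : MulValuation K G) (π : K → F) : Prop :=
  π 0 = 0 ∧ π 1 = 1 ∧
  (∀ x y : K, x ∈ V.ringSet → y ∈ V.ringSet → π (x + y) = π x + π y) ∧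
  (∀ x y : K, x ∈ V.ringSet → y ∈ V.ringSet → π (x * y) = π x * π y) ∧
  (∀ x : K, x ≠ 0 → x ∈ V.ringSet → (π x ≠ 0 ↔ V.v x = 1)) ∧
  (∀ c : F, ∃ x ∈ V.ringSet, π x = c)

/-- `pan` is a pseudo-angular component map for `V` (with residue map `π`),
i.e. it satisfies conditions (1)-(6) of the paper (stated on nonzero elements). -/
def MulValuation.IsPseudoAngular {K : Type*} [Field K] {G : Type*} [CommGroup G] [LinearOrder G] [IsOrderedMonoid G]
    {F : Type*} [Field F] (V : MulValuation K G) (π : K → F) (pan : K → F) : Prop :=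
  (∀ x : K, x ≠ 0 → pan x ≠ 0) ∧
  (∀ u : K, u ≠ 0 → V.v u = 1 → pan u = π u) ∧
  (∀ u x : K, u ≠ 0 → V.v u = 1 → x ≠ 0 → pan (u * x) = π u * pan x) ∧
  (∀ (g : G) (c : F), c ≠ 0 → ∃ w : K, w ≠ 0 ∧ V.v w = g ∧ pan w = c) ∧
  (∀ x₁ x₂ : K, x₁ ≠ 0 → x₂ ≠ 0 → x₁ + x₂ ≠ 0 →
    (V.v x₁ < V.v x₂ → pan (x₁ + x₂) = pan x₁) ∧
    (V.v x₁ = V.v x₂ → pan x₁ + pan x₂ ≠ 0 →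
      V.v (x₁ + x₂) = V.v x₁ ∧ pan (x₁ + x₂) = pan x₁ + pan x₂)) ∧
  (∀ x y : K, x ≠ 0 → y ≠ 0 → (∃ u : G, V.v x * (V.v y)⁻¹ = u ^ 2) → pan x = pan y →
    ∃ u : K, u ≠ 0 ∧ y = u ^ 2 * x) ∧
  (∀ a u : K, a ≠ 0 → u ≠ 0 → ∃ k : F, k ≠ 0 ∧ pan (a * u ^ 2) = pan a * k ^ 2)

/-- `M_g(ℳ)`: the quasi-quadratic module of the residue field generated by `ℳ` and `g`. -/
def MulValuation.Mg {K : Type*} [Field K] {G : Type*} [CommGroup G] [LinearOrder G] [IsOrderedMonoid G]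
    {F : Type*} [Field F] (V : MulValuation K G) (pan : K → F) (M : Set K) (g : G) : Set F :=
  {c : F | ∃ x : K, x ≠ 0 ∧ x ∈ M ∧ V.v x = g ∧ pan x = c} ∪ {0}

structure IsQuasiQuadModule {R : Type*} [CommRing R] (A : Subring R) (M : Set R) : Prop where
  add_mem : ∀ x ∈ M, ∀ y ∈ M, x + y ∈ M
  sq_mul_mem : ∀ a ∈ A, ∀ x ∈ M, a ^ 2 * x ∈ M

theorem IsQuasiQuadModule.mul_mem_of_mem_of_neg_mem {K : Type*} [Field K] {A : Subring K}
    {M : Set K} (hM : IsQuasiQuadModule A M) (h2 : (2 : K) ≠ 0) (hhalf : (2 : K)⁻¹ ∈ A)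
    {x b : K} (hx : x ∈ M) (hnx : -x ∈ M) (hb : b ∈ A) : b * x ∈ M := by
  have hid : ((b + 1) * 2⁻¹) ^ 2 * x + ((b - 1) * 2⁻¹) ^ 2 * (-x) = b * x := by
    field_simp
    ring
  rw [← hid]
  exact hM.add_mem _ (hM.sq_mul_mem _ (A.mul_mem (A.add_mem hb A.one_mem) hhalf) x hx) _
    (hM.sq_mul_mem _ (A.mul_mem (A.sub_mem hb A.one_mem) hhalf) _ hnx)

namespace MulValuation

variable {K : Type*} [Field K] {G : Type*} [CommGroup G] [LinearOrder G] [IsOrderedMonoid G]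
  (V : MulValuation K G)

theorem v_one : V.v 1 = 1 := by
  have h := V.map_mul (one_ne_zero' K) (one_ne_zero' K)
  rw [mul_one] at h
  exact mul_eq_left.mp h.symm

theorem v_neg {x : K} (hx : x ≠ 0) : V.v (-x) = V.v x := by
  have hneg1 : V.v (-1) = 1 := by
    have h := V.map_mul (neg_ne_zero.mpr (one_ne_zero' K)) (neg_ne_zero.mpr (one_ne_zero' K))
    rw [neg_mul_neg, mul_one, v_one, ← sq] at h
    exact sq_eq_one.mp h.symm
  rw [← neg_one_mul, V.map_mul (neg_ne_zero.mpr one_ne_zero) hx, hneg1, one_mul]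

theorem v_inv {x : K} (hx : x ≠ 0) : V.v x⁻¹ = (V.v x)⁻¹ := by
  have h := V.map_mul hx (inv_ne_zero hx)
  rw [mul_inv_cancel₀ hx, v_one] at h
  exact (inv_eq_of_mul_eq_one_right h.symm).symm

theorem v_mul_inv {x y : K} (hx : x ≠ 0) (hy : y ≠ 0) : V.v (x * y⁻¹) = V.v x / V.v y := by
  rw [V.map_mul hx (inv_ne_zero hy), V.v_inv hy, div_eq_mul_inv]

theorem inv_mem_ringSet {x : K} (hx : x ≠ 0) (hv : V.v x = 1) : x⁻¹ ∈ V.ringSet :=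
  Or.inr (by rw [V.v_inv hx, hv, inv_one])

variable {V} {A : Subring K} (hBA : V.ringSet ⊆ (A : Set K)) {M : Set K}
  (hM : IsQuasiQuadModule A M)
include hBA hM

theorem Mg_eq_univ_iff {F : Type*} [Field F] {π pan : K → F} (hpan : V.IsPseudoAngular π pan)
    (g : G) : V.Mg pan M g = Set.univ ↔ ∀ x : K, x ≠ 0 → V.v x = g → x ∈ M := by
  obtain ⟨pan_ne_zero, -, -, pan_surj, -, pan_eq_sq_mul, -⟩ := hpan
  constructor
  · intro hMg x hx hvx
    obtain ⟨y, hy, hyM, hvy, hpy⟩ | hpx := (hMg ▸ Set.mem_univ (pan x) : pan x ∈ V.Mg pan M g)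
    · obtain ⟨u, hu, rfl⟩ := pan_eq_sq_mul y x hy hx ⟨1, by rw [hvy, hvx]; simp⟩ hpy
      have hvu : V.v u = 1 := by
        rw [V.map_mul (pow_ne_zero 2 hu) hy, hvy, mul_eq_right, sq, V.map_mul hu hu, ← sq]
          at hvx
        exact sq_eq_one.mp hvx
      exact hM.sq_mul_mem u (hBA (Or.inr hvu.ge)) y hyM
    · exact absurd hpx (pan_ne_zero x hx)
  · intro hg
    refine Set.eq_univ_of_forall fun c => ?_
    by_cases hc : c = 0
    · exact Or.inr hc
    obtain ⟨w, hw, hvw, hpw⟩ := pan_surj g c hc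
    exact Or.inl ⟨w, hw, hg w hw hvw, hvw, hpw⟩

theorem mem_of_mem_support_of_v_le (h2 : (2 : K) ≠ 0 ∧ V.v 2 = 1) {x z : K} (hx : x ≠ 0)
    (hxM : x ∈ M) (hnxM : -x ∈ M) (hz : z ≠ 0) (hle : V.v x ≤ V.v z) : z ∈ M := by
  have hzx : z * x⁻¹ ∈ A := hBA (Or.inr (by rw [V.v_mul_inv hz hx]; exact one_le_div'.mpr hle))
  simpa [hx] using
    hM.mul_mem_of_mem_of_neg_mem h2.1 (hBA (V.inv_mem_ringSet h2.1 h2.2)) hxM hnxM hzx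

end MulValuation

theorem stmt16_general {K : Type*} [Field K] {G : Type*} [CommGroup G] [LinearOrder G] [IsOrderedMonoid G]
    {F : Type*} [Field F] (V : MulValuation K G) (π : K → F)
    (pan : K → F) (hpan : V.IsPseudoAngular π pan)
    (A : Subring K) (hBA : V.ringSet ⊆ (A : Set K))
    -- `2` is a unit in the valuation ring `B`
    (h2 : (2 : K) ≠ 0 ∧ V.v 2 = 1)
    (M : Set K) (hMA : M ⊆ (A : Set K))
    (hadd : ∀ x ∈ M, ∀ y ∈ M, x + y ∈ M)
    (hsq : ∀ a : K, a ∈ A → ∀ x ∈ M, a ^ 2 * x ∈ M) :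
    -- (1) ↔ (2)
    (∀ x : K, x ≠ 0 → x ∈ A →
      ((x ∈ M ∧ -x ∈ M) ↔ V.Mg pan M (V.v x) = Set.univ)) ∧
    -- moreover
    (∀ g h : G, V.Mg pan M g = Set.univ → g ≤ h → V.Mg pan M h = Set.univ) ∧
    -- in particular
    (M = (A : Set K) ↔ V.Mg pan M 1 = Set.univ) := by
  have hM : IsQuasiQuadModule A M := ⟨hadd, hsq⟩
  simp only [MulValuation.Mg_eq_univ_iff hBA hM hpan]
  refine ⟨fun x hx _ => ⟨?_, fun h => ⟨h x hx rfl, h (-x) (neg_ne_zero.mpr hx) (V.v_neg hx)⟩⟩,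
    fun g h hg hgh z hz hvz => ?_, ⟨?_, fun h => ?_⟩⟩
  · rintro ⟨hxM, hnxM⟩ z hz hvz
    exact MulValuation.mem_of_mem_support_of_v_le hBA hM h2 hx hxM hnxM hz hvz.ge
  · obtain ⟨x, hx, rfl⟩ := V.surj g
    exact MulValuation.mem_of_mem_support_of_v_le hBA hM h2 hx (hg x hx rfl)
      (hg (-x) (neg_ne_zero.mpr hx) (V.v_neg hx)) hz (hvz ▸ hgh)
  · rintro rfl x - hvx
    exact hBA (Or.inr hvx.ge)
  · have h1 : (1 : K) ∈ M := h 1 one_ne_zero V.v_one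
    have hn1 : (-1 : K) ∈ M :=
      h (-1) (neg_ne_zero.mpr one_ne_zero) (by rw [V.v_neg one_ne_zero, V.v_one])
    refine hMA.antisymm fun a ha => ?_
    simpa using hM.mul_mem_of_mem_of_neg_mem h2.1 (hBA (V.inv_mem_ringSet h2.1 h2.2)) h1 hn1 ha

theorem stmt16 {K : Type*} [Field K] {G : Type*} [CommGroup G] [LinearOrder G] [IsOrderedMonoid G]
    {F : Type*} [Field F] (V : MulValuation K G) (π : K → F)
    (hres : V.IsResidue π)
    (hsqrt : ∀ x : K, x ≠ 0 → V.v x = 1 → π x = 1 → ∃ y : K, x = y ^ 2)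
    (pan : K → F) (hpan : V.IsPseudoAngular π pan)
    (A : Subring K) (hBA : V.ringSet ⊆ (A : Set K))
    -- `2` is a unit in the valuation ring `B`
    (h2 : (2 : K) ≠ 0 ∧ V.v 2 = 1)
    (M : Set K) (hMA : M ⊆ (A : Set K)) (h0 : (0 : K) ∈ M)
    (hadd : ∀ x ∈ M, ∀ y ∈ M, x + y ∈ M)
    (hsq : ∀ a : K, a ∈ A → ∀ x ∈ M, a ^ 2 * x ∈ M) :
    -- (1) ↔ (2)
    (∀ x : K, x ≠ 0 → x ∈ A →
      ((x ∈ M ∧ -x ∈ M) ↔ V.Mg pan M (V.v x) = Set.univ)) ∧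
    -- moreover
    (∀ g h : G, V.Mg pan M g = Set.univ → g ≤ h → V.Mg pan M h = Set.univ) ∧
    -- in particular
    (M = (A : Set K) ↔ V.Mg pan M 1 = Set.univ) :=
  stmt16_general V π pan hpan A hBA h2 M hMA hadd hsq
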